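/- arXiv:1805.06693 — 2 statements merged into one kernel-verified Lean document; each statement's English description precedes it below -/
import Mathlib

section
/- Let G=(V,E) be a finite rooted tree with root 1, and let ρ ∈ [0,1)^V satisfy ∑_{v'∈Ā(v)} ρ_{v'} < 1 for all v ∈ V. Define c(ρ) = ∑_{n ∈ ℕ^V} ∏_{v∈V} ρ_v^{n_v} · C(∑_{v'∈ D̄(v)} n_{v'}, n_v), where C denotes the binomial coefficient and D̄(v) is the set consisting of v and its descendants. Then this sum converges and c(ρ) = ∏_{v∈V} (1 − ∑_{v'∈A(v)} ρ_{v'}) / (1 − ∑_{v'∈Ā(v)} ρ_{v'}). -/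
open Finset

def ancestors {n : ℕ} [NeZero n] (par : Fin n → Fin n) (hpar : ∀ v, v ≠ 0 → par v < v) :
    Fin n → Finset (Fin n) :=
  fun v =>
    if h : v = 0 then ∅ else insert (par v) (ancestors par hpar (par v))
termination_by v => (v : ℕ)
decreasing_by exact hpar _ h

/-- `v` together with its strict ancestors. -/
def barA {n : ℕ} [NeZero n] (par : Fin n → Fin n) (hpar : ∀ v, v ≠ 0 → par v < v)
    (v : Fin n) : Finset (Fin n) :=
  insert v (ancestors par hpar v)

/-- `v` together with its descendants. -/
def barD {n : ℕ} [NeZero n] (par : Fin n → Fin n) (hpar : ∀ v, v ≠ 0 → par v < v)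
    (v : Fin n) : Finset (Fin n) :=
  Finset.univ.filter (fun w => v ∈ barA par hpar w)

/-- strict descendants of `v`. -/
def strictD {n : ℕ} [NeZero n] (par : Fin n → Fin n) (hpar : ∀ v, v ≠ 0 → par v < v)
    (v : Fin n) : Finset (Fin n) :=
  Finset.univ.filter (fun w => v ∈ ancestors par hpar w)

/-- children of `v`. -/
def children {n : ℕ} [NeZero n] (par : Fin n → Fin n) (v : Fin n) : Finset (Fin n) :=
  Finset.univ.filter (fun w => w ≠ 0 ∧ par w = v)

/-!
Sum out the coordinates of `m` in the order `0, 1, …, n - 1`, parents before children. When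
every strict ancestor of `v` carries load `0`, the factors at those ancestors are `0 ^ m u`,
independent of `m v`, and the sum over `m v` is the negative binomial series
`∑ₖ ρᵥᵏ C(k + D, k) = (1 - ρᵥ)⁻¹ ^ (D + 1)`, where `D` is the total of `m` strictly below `v`.
The factor `(1 - ρᵥ)⁻¹ ^ D` is absorbed by dividing the loads of the strict descendants of `v`
by `1 - ρᵥ` and setting `ρᵥ = 0`; this changes the product formula by exactly `1 - ρᵥ`.
-/

theorem HasSum.prod_of_fiberwise_of_nonneg {β γ : Type*} {f : β × γ → ℝ} {g : β → ℝ}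
    {a : ℝ} (hg : HasSum g a) (hf : 0 ≤ f) (hfib : ∀ b, HasSum (fun c ↦ f (b, c)) (g b)) :
    HasSum f a := by
  have hsum : Summable f := (summable_prod_of_nonneg hf).2
    ⟨fun b ↦ (hfib b).summable, by simpa only [(hfib _).tsum_eq] using hg.summable⟩
  simpa only [(hsum.hasSum.prod_fiberwise hfib).unique hg] using hsum.hasSum

theorem hasSum_pow_mul_choose {r : ℝ} (hr0 : 0 ≤ r) (hr1 : r < 1) (D : ℕ) :
    HasSum (fun k : ℕ ↦ r ^ k * ((k + D).choose k : ℝ)) ((1 - r)⁻¹ ^ (D + 1)) := by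
  have h := hasSum_choose_mul_geometric_of_norm_lt_one D (r := r) (by
    rwa [Real.norm_of_nonneg hr0])
  simpa only [Nat.choose_symm_add, mul_comm, one_div, inv_pow] using h

section Tree

variable {n : ℕ} [NeZero n] {par : Fin n → Fin n} {hpar : ∀ v, v ≠ 0 → par v < v}

theorem ancestors_of_ne_zero {v : Fin n} (h0 : v ≠ 0) :
    ancestors par hpar v = insert (par v) (ancestors par hpar (par v)) := by
  rw [ancestors, dif_neg h0]

theorem lt_of_mem_ancestors {u v : Fin n} (h : u ∈ ancestors par hpar v) : u < v := by
  by_cases h0 : v = 0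
  · simp [ancestors, h0] at h
  · rw [ancestors_of_ne_zero h0, mem_insert] at h
    rcases h with rfl | h
    · exact hpar v h0
    · exact (lt_of_mem_ancestors h).trans (hpar v h0)
termination_by (v : ℕ)
decreasing_by exact hpar v h0

theorem ancestors_subset_of_mem {u v : Fin n} (h : u ∈ ancestors par hpar v) :
    ancestors par hpar u ⊆ ancestors par hpar v := by
  by_cases h0 : v = 0
  · simp [ancestors, h0] at h
  · rw [ancestors_of_ne_zero h0]
    rw [ancestors_of_ne_zero h0, mem_insert] at h
    rcases h with rfl | h
    · exact subset_insert _ _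
    · exact (ancestors_subset_of_mem h).trans (subset_insert _ _)
termination_by (v : ℕ)
decreasing_by exact hpar v h0

theorem ancestors_trichotomous {u₁ u₂ v : Fin n} (h₁ : u₁ ∈ ancestors par hpar v)
    (h₂ : u₂ ∈ ancestors par hpar v) :
    u₁ = u₂ ∨ u₁ ∈ ancestors par hpar u₂ ∨ u₂ ∈ ancestors par hpar u₁ := by
  by_cases h0 : v = 0
  · simp [ancestors, h0] at h₁
  · rw [ancestors_of_ne_zero h0, mem_insert] at h₁ h₂
    rcases h₁ with rfl | h₁ <;> rcases h₂ with rfl | h₂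
    · exact .inl rfl
    · exact .inr (.inr h₂)
    · exact .inr (.inl h₁)
    · exact ancestors_trichotomous h₁ h₂
termination_by (v : ℕ)
decreasing_by exact hpar v h0

theorem not_mem_ancestors_self (v : Fin n) : v ∉ ancestors par hpar v :=
  fun h ↦ (lt_of_mem_ancestors h).false

theorem not_mem_ancestors_of_mem {u v : Fin n} (h : u ∈ ancestors par hpar v) :
    v ∉ ancestors par hpar u :=
  fun h' ↦ ((lt_of_mem_ancestors h).trans (lt_of_mem_ancestors h')).false

theorem mem_barA {u v : Fin n} : u ∈ barA par hpar v ↔ u = v ∨ u ∈ ancestors par hpar v :=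
  mem_insert

theorem mem_strictD {u v : Fin n} : u ∈ strictD par hpar v ↔ v ∈ ancestors par hpar u := by
  simp [strictD]

theorem not_mem_strictD_self (v : Fin n) : v ∉ strictD par hpar v := by
  simpa [mem_strictD] using not_mem_ancestors_self v

theorem barD_eq_insert_strictD (v : Fin n) :
    barD par hpar v = insert v (strictD par hpar v) := by
  ext w
  simp [barD, mem_barA, mem_strictD, eq_comm]

theorem barA_trichotomous {u₁ u₂ v : Fin n} (h₁ : u₁ ∈ barA par hpar v)
    (h₂ : u₂ ∈ barA par hpar v) :
    u₁ = u₂ ∨ u₁ ∈ ancestors par hpar u₂ ∨ u₂ ∈ ancestors par hpar u₁ := by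
  rw [mem_barA] at h₁ h₂
  rcases h₁ with rfl | h₁ <;> rcases h₂ with rfl | h₂
  · exact .inl rfl
  · exact .inr (.inr h₂)
  · exact .inr (.inl h₁)
  · exact ancestors_trichotomous h₁ h₂

theorem ancestors_subset_barA_of_mem {u v : Fin n} (h : u ∈ barA par hpar v) :
    ancestors par hpar u ⊆ barA par hpar v := by
  rcases mem_barA.1 h with rfl | h
  · exact subset_insert _ _
  · exact (ancestors_subset_of_mem h).trans (subset_insert _ _)

end Tree

section Weights

variable {n : ℕ} [NeZero n] (par : Fin n → Fin n) (hpar : ∀ v, v ≠ 0 → par v < v)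

def pfWeight (ρ : Fin n → ℝ) (m : Fin n → ℕ) : ℝ :=
  ∏ v, ρ v ^ m v * ((∑ v' ∈ barD par hpar v, m v').choose (m v) : ℝ)

noncomputable def pfNormConst (ρ : Fin n → ℝ) : ℝ :=
  ∏ v, (1 - ∑ v' ∈ ancestors par hpar v, ρ v') / (1 - ∑ v' ∈ barA par hpar v, ρ v')

noncomputable def peel (ρ : Fin n → ℝ) (v : Fin n) : Fin n → ℝ :=
  fun u ↦ if u = v then 0 else if u ∈ strictD par hpar v then ρ u / (1 - ρ v) else ρ u

variable {par hpar} {ρ : Fin n → ℝ} {u v : Fin n} {m : Fin n → ℕ}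

theorem pfWeight_nonneg (hρ : ∀ u, 0 ≤ ρ u) (m : Fin n → ℕ) : 0 ≤ pfWeight par hpar ρ m :=
  prod_nonneg fun u _ ↦ mul_nonneg (pow_nonneg (hρ u) _) (Nat.cast_nonneg _)

theorem hasSum_pfWeight_zero : HasSum (pfWeight par hpar 0) 1 := by
  convert hasSum_single (0 : Fin n → ℕ) fun m hm ↦ ?_
  · simp [pfWeight]
  · obtain ⟨u, hu⟩ := Function.ne_iff.1 hm
    exact prod_eq_zero (mem_univ u) (by simp [zero_pow hu])

theorem pfNormConst_zero : pfNormConst par hpar 0 = 1 := by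
  simp [pfNormConst]

theorem sum_peel_of_mem {S : Finset (Fin n)} (hS : S ⊆ barA par hpar u) (hv : v ∈ S)
    (hanc : ∀ w ∈ ancestors par hpar v, ρ w = 0) :
    ∑ w ∈ S, peel par hpar ρ v w = (∑ w ∈ S, ρ w - ρ v) / (1 - ρ v) := by
  have hpoint : ∀ w ∈ S,
      peel par hpar ρ v w = (ρ w - if w = v then ρ v else 0) / (1 - ρ v) := by
    intro w hw
    rcases barA_trichotomous (hS hw) (hS hv) with rfl | hwv | hvw
    · simp [peel]
    · have hwv' : w ≠ v := fun h ↦ not_mem_ancestors_self v (h ▸ hwv)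
      have hws : w ∉ strictD par hpar v := mem_strictD.not.2 (not_mem_ancestors_of_mem hwv)
      simp [peel, hwv', hws, hanc w hwv]
    · have hws : w ∈ strictD par hpar v := mem_strictD.2 hvw
      have hwv' : w ≠ v := fun h ↦ not_mem_strictD_self v (h ▸ hws)
      simp [peel, hwv', hws]
  rw [sum_congr rfl hpoint, ← sum_div, sum_sub_distrib, sum_ite_eq' S v, if_pos hv]

theorem sum_peel_of_not_mem {S : Finset (Fin n)} (hS : ∀ w ∈ S, ancestors par hpar w ⊆ S)
    (hv : v ∉ S) : ∑ w ∈ S, peel par hpar ρ v w = ∑ w ∈ S, ρ w := by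
  refine sum_congr rfl fun w hw ↦ ?_
  have hwv : w ≠ v := fun h ↦ hv (h ▸ hw)
  have hws : w ∉ strictD par hpar v := fun h ↦ hv (hS w hw (mem_strictD.1 h))
  simp [peel, hwv, hws]

theorem one_sub_sum_peel {S : Finset (Fin n)} (hS : S ⊆ barA par hpar u)
    (hS' : ∀ w ∈ S, ancestors par hpar w ⊆ S) (hv1 : ρ v < 1)
    (hanc : ∀ w ∈ ancestors par hpar v, ρ w = 0) :
    1 - ∑ w ∈ S, peel par hpar ρ v w =
      (if v ∈ S then (1 - ρ v)⁻¹ else 1) * (1 - ∑ w ∈ S, ρ w) := by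
  split_ifs with hv
  · rw [sum_peel_of_mem hS hv hanc]
    field_simp [(sub_pos.2 hv1).ne']
    ring
  · rw [sum_peel_of_not_mem hS' hv, one_mul]

theorem one_sub_sum_barA_peel (hv1 : ρ v < 1) (hanc : ∀ w ∈ ancestors par hpar v, ρ w = 0) :
    1 - ∑ w ∈ barA par hpar u, peel par hpar ρ v w =
      (if v ∈ barA par hpar u then (1 - ρ v)⁻¹ else 1) * (1 - ∑ w ∈ barA par hpar u, ρ w) :=
  one_sub_sum_peel subset_rfl (fun _ ↦ ancestors_subset_barA_of_mem) hv1 hanc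

theorem one_sub_sum_ancestors_peel (hv1 : ρ v < 1)
    (hanc : ∀ w ∈ ancestors par hpar v, ρ w = 0) :
    1 - ∑ w ∈ ancestors par hpar u, peel par hpar ρ v w =
      (if v ∈ ancestors par hpar u then (1 - ρ v)⁻¹ else 1) *
        (1 - ∑ w ∈ ancestors par hpar u, ρ w) :=
  one_sub_sum_peel (subset_insert _ _) (fun _ ↦ ancestors_subset_of_mem) hv1 hanc

theorem pfNormConst_peel (hv1 : ρ v < 1) (hanc : ∀ w ∈ ancestors par hpar v, ρ w = 0)
    (hload : ∀ u, ∑ w ∈ barA par hpar u, ρ w < 1) :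
    pfNormConst par hpar (peel par hpar ρ v) = (1 - ρ v) * pfNormConst par hpar ρ := by
  have hv0 : 1 - ρ v ≠ 0 := (sub_pos.2 hv1).ne'
  have hfactor : ∀ u, (1 - ∑ w ∈ ancestors par hpar u, peel par hpar ρ v w) /
      (1 - ∑ w ∈ barA par hpar u, peel par hpar ρ v w) =
      (if u = v then 1 - ρ v else 1) *
        ((1 - ∑ w ∈ ancestors par hpar u, ρ w) / (1 - ∑ w ∈ barA par hpar u, ρ w)) := by
    intro u
    have hu0 : 1 - ∑ w ∈ barA par hpar u, ρ w ≠ 0 := (sub_pos.2 (hload u)).ne'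
    rw [one_sub_sum_barA_peel hv1 hanc, one_sub_sum_ancestors_peel hv1 hanc]
    by_cases huv : u = v
    · subst huv
      simp only [if_neg (not_mem_ancestors_self u), mem_barA, true_or, if_true]
      field_simp
    · have hiff : v ∈ barA par hpar u ↔ v ∈ ancestors par hpar u := by
        simp [mem_barA, Ne.symm huv]
      simp only [hiff, if_neg huv, one_mul]
      split_ifs
      · exact mul_div_mul_left _ _ (inv_ne_zero hv0)
      · rw [one_mul, one_mul]
  rw [pfNormConst, pfNormConst, prod_congr rfl fun u _ ↦ hfactor u, prod_mul_distrib,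
    prod_ite_eq' univ v, if_pos (mem_univ v)]

theorem sum_barD_update_self (m : Fin n → ℕ) (v : Fin n) (k : ℕ) :
    ∑ w ∈ barD par hpar v, Function.update m v k w = k + ∑ w ∈ strictD par hpar v, m w := by
  rw [barD_eq_insert_strictD, sum_insert (not_mem_strictD_self v), Function.update_self]
  congr 1
  refine sum_congr rfl fun w hw ↦ Function.update_of_ne ?_ _ _
  rintro rfl
  exact not_mem_strictD_self w hw

theorem pfWeight_update (hanc : ∀ w ∈ ancestors par hpar v, ρ w = 0) (m : Fin n → ℕ) (k : ℕ) :
    pfWeight par hpar ρ (Function.update m v k) =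
      ρ v ^ k * ((k + ∑ w ∈ strictD par hpar v, m w).choose k : ℝ) *
        pfWeight par hpar ρ (Function.update m v 0) := by
  have hfactor : ∀ u ∈ univ.erase v, ∀ j : ℕ,
      ρ u ^ Function.update m v j u * ((∑ w ∈ barD par hpar u, Function.update m v j w).choose
        (Function.update m v j u) : ℝ) =
      ρ u ^ m u * ((∑ w ∈ barD par hpar u, Function.update m v 0 w).choose (m u) : ℝ) := by
    intro u hu j
    have huv := ne_of_mem_erase hu
    simp only [Function.update_of_ne huv]
    by_cases hua : u ∈ ancestors par hpar v
    · -- `0 ^ i * C(N, i)` does not depend on `N`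
      rw [hanc u hua]
      rcases Nat.eq_zero_or_pos (m u) with h | h
      · simp [h]
      · simp [zero_pow h.ne']
    · have hvu : v ∉ barD par hpar u := by simp [barD, mem_barA, huv, hua]
      congr 3
      refine sum_congr rfl fun w hw ↦ ?_
      have hwv : w ≠ v := fun h ↦ hvu (h ▸ hw)
      rw [Function.update_of_ne hwv, Function.update_of_ne hwv]
  simp only [pfWeight, ← mul_prod_erase univ _ (mem_univ v), sum_barD_update_self,
    Function.update_self, prod_congr rfl fun u hu ↦ hfactor u hu _]
  simp

theorem pfWeight_peel_of_ne_zero (hm : m v ≠ 0) : pfWeight par hpar (peel par hpar ρ v) m = 0 :=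
  prod_eq_zero (mem_univ v) (by simp [peel, zero_pow hm])

theorem pfWeight_peel_of_eq_zero (hm : m v = 0) :
    pfWeight par hpar (peel par hpar ρ v) m =
      (1 - ρ v)⁻¹ ^ (∑ w ∈ strictD par hpar v, m w) * pfWeight par hpar ρ m := by
  have hpow : ∀ u, peel par hpar ρ v u ^ m u =
      (1 - ρ v)⁻¹ ^ (if u ∈ strictD par hpar v then m u else 0) * ρ u ^ m u := by
    intro u
    by_cases huv : u = v
    · simp [huv, hm, peel, not_mem_strictD_self]
    · by_cases hus : u ∈ strictD par hpar v <;>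
        simp [peel, huv, hus, div_eq_mul_inv, mul_pow, mul_comm]
  simp only [pfWeight, hpow, mul_assoc, prod_mul_distrib, prod_pow_eq_pow_sum, sum_ite_mem,
    univ_inter]

theorem hasSum_pfWeight_update (hρ : ∀ u, 0 ≤ ρ u) (hv1 : ρ v < 1)
    (hanc : ∀ w ∈ ancestors par hpar v, ρ w = 0) (hm : m v = 0) :
    HasSum (fun k ↦ pfWeight par hpar ρ (Function.update m v k))
      ((1 - ρ v)⁻¹ * pfWeight par hpar (peel par hpar ρ v) m) := by
  have h := (hasSum_pow_mul_choose (hρ v) hv1 (∑ w ∈ strictD par hpar v, m w)).mul_right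
    (pfWeight par hpar ρ m)
  rw [pfWeight_peel_of_eq_zero hm, ← mul_assoc, ← pow_succ']
  simpa only [pfWeight_update hanc, ← hm, Function.update_eq_self] using h

theorem HasSum.pfWeight_of_peel {T : ℝ} (hρ : ∀ u, 0 ≤ ρ u) (hv1 : ρ v < 1)
    (hanc : ∀ w ∈ ancestors par hpar v, ρ w = 0)
    (h : HasSum (pfWeight par hpar (peel par hpar ρ v)) T) :
    HasSum (pfWeight par hpar ρ) ((1 - ρ v)⁻¹ * T) := by
  classical
  let e : ({j // j ≠ v} → ℕ) × ℕ ≃ (Fin n → ℕ) :=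
    (Equiv.prodComm _ _).trans (Equiv.funSplitAt v ℕ).symm
  have he : ∀ μ k, e (μ, k) = Function.update (e (μ, 0)) v k := by
    intro μ k
    ext j
    by_cases hj : j = v
    · subst hj; simp [e, Equiv.funSplitAt, Equiv.piSplitAt]
    · simp [e, Equiv.funSplitAt, Equiv.piSplitAt, hj]
  have he0 : ∀ μ, e (μ, 0) v = 0 := fun μ ↦ by simp [e, Equiv.funSplitAt, Equiv.piSplitAt]
  have hinj : Function.Injective fun μ ↦ e (μ, 0) :=
    fun μ μ' hμ ↦ congrArg Prod.fst (e.injective hμ)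
  have hrange : ∀ m, m ∉ Set.range (fun μ ↦ e (μ, 0)) → m v ≠ 0 := by
    intro m hm hmv
    refine hm ⟨fun j ↦ m j, ?_⟩
    simpa [e, ← hmv] using e.apply_symm_apply m
  rw [← e.hasSum_iff]
  refine HasSum.prod_of_fiberwise_of_nonneg (g := fun μ ↦ (1 - ρ v)⁻¹ *
    pfWeight par hpar (peel par hpar ρ v) (e (μ, 0))) ?_ (fun _ ↦ pfWeight_nonneg hρ _) ?_
  · exact ((hinj.hasSum_iff fun m hm ↦ pfWeight_peel_of_ne_zero (hrange m hm)).2 h).mul_left _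
  · intro μ
    simpa only [Function.comp_apply, ← he] using hasSum_pfWeight_update hρ hv1 hanc (he0 μ)

theorem peel_nonneg (hρ : ∀ u, 0 ≤ ρ u) (hv1 : ρ v < 1) (u : Fin n) :
    0 ≤ peel par hpar ρ v u := by
  unfold peel
  split_ifs
  exacts [le_rfl, div_nonneg (hρ u) (sub_pos.2 hv1).le, hρ u]

theorem sum_barA_peel_lt_one (hv1 : ρ v < 1) (hanc : ∀ w ∈ ancestors par hpar v, ρ w = 0)
    (hload : ∀ u, ∑ w ∈ barA par hpar u, ρ w < 1) (u : Fin n) :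
    ∑ w ∈ barA par hpar u, peel par hpar ρ v w < 1 := by
  have h := one_sub_sum_barA_peel (u := u) hv1 hanc
  have hpos : 0 < (if v ∈ barA par hpar u then (1 - ρ v)⁻¹ else 1) := by
    split_ifs
    exacts [inv_pos.2 (sub_pos.2 hv1), one_pos]
  nlinarith [mul_pos hpos (sub_pos.2 (hload u))]

theorem peel_eq_zero_of_lt (hρu : ρ u = 0) (hu : u < v) : peel par hpar ρ v u = 0 := by
  have hus : u ∉ strictD par hpar v :=
    fun h ↦ (lt_of_mem_ancestors (mem_strictD.1 h)).not_gt hu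
  simp [peel, hus, hρu]

theorem hasSum_pfWeight_of_forall_lt_eq_zero {k : ℕ} (hk : k ≤ n) (hρ : ∀ u, 0 ≤ ρ u)
    (hload : ∀ u, ∑ w ∈ barA par hpar u, ρ w < 1) (hzero : ∀ u : Fin n, (u : ℕ) < k → ρ u = 0) :
    HasSum (pfWeight par hpar ρ) (pfNormConst par hpar ρ) := by
  induction hk using Nat.decreasingInduction generalizing ρ with
  | self =>
    obtain rfl : ρ = 0 := funext fun u ↦ hzero u u.isLt
    simpa only [pfNormConst_zero] using hasSum_pfWeight_zero
  | of_succ j hj ih =>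
    set v : Fin n := ⟨j, hj⟩
    have hanc : ∀ w ∈ ancestors par hpar v, ρ w = 0 :=
      fun w hw ↦ hzero w (lt_of_mem_ancestors hw)
    have hv1 : ρ v < 1 :=
      (single_le_sum (fun w _ ↦ hρ w) (mem_insert_self v _)).trans_lt (hload v)
    have hzero' : ∀ u : Fin n, (u : ℕ) < j + 1 → peel par hpar ρ v u = 0 := by
      intro u hu
      rcases Nat.lt_succ_iff_lt_or_eq.1 hu with hu | hu
      · exact peel_eq_zero_of_lt (hzero u hu) hu
      · simp [peel, show u = v from Fin.ext hu]
    have hpeel := ih (peel_nonneg hρ hv1) (sum_barA_peel_lt_one hv1 hanc hload) hzero'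
    rw [pfNormConst_peel hv1 hanc hload] at hpeel
    simpa only [inv_mul_cancel_left₀ (sub_pos.2 hv1).ne'] using
      hpeel.pfWeight_of_peel hρ hv1 hanc

end Weights

/-- Normalization constant for the PF stationary distribution: the sum over all states
`m ∈ ℕ^V` of `∏_v ρ_v^{m_v} C(∑_{v' ∈ D̄(v)} m_{v'}, m_v)` converges and equals
`∏_v (1 - ∑_{v' ∈ A(v)} ρ_{v'}) / (1 - ∑_{v' ∈ Ā(v)} ρ_{v'})`. -/
theorem pf_normalization_constant {n : ℕ} [NeZero n] (par : Fin n → Fin n)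
    (hpar : ∀ v, v ≠ 0 → par v < v) (ρ : Fin n → ℝ) (hρ : ∀ v, 0 ≤ ρ v)
    (hload : ∀ v, ∑ v' ∈ barA par hpar v, ρ v' < 1) :
    HasSum
      (fun m : Fin n → ℕ =>
        ∏ v, ρ v ^ m v * ((∑ v' ∈ barD par hpar v, m v').choose (m v) : ℝ))
      (∏ v, (1 - ∑ v' ∈ ancestors par hpar v, ρ v') /
        (1 - ∑ v' ∈ barA par hpar v, ρ v')) :=
  hasSum_pfWeight_of_forall_lt_eq_zero (Nat.zero_le n) hρ hload fun _ h ↦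
    absurd h (Nat.not_lt_zero _)
end

section
/- Let G be a finite rooted tree and for each vertex v let α = 1 (proportional fairness) and n_v ∈ ℕ with ∑_{v'∈D̄(v)} n_{v'} > 0 for all v. Define κ*_v = n_v / ∑_{v'∈D̄(v)} n_{v'} and γ*_v = κ*_v ∏_{v''∈A(v)} (1 − κ*_{v''}). Then for every v, ∑_{v'∈Ā(v)} γ*_{v'} ≤ 1; i.e., the proportional-fair activation vector is feasible. -/
open Finset

lemma ancestors_zero {n : ℕ} [NeZero n] (par : Fin n → Fin n)
    (hpar : ∀ v, v ≠ 0 → par v < v) : ancestors par hpar 0 = ∅ := by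
  rw [ancestors]; simp

lemma ancestors_ne {n : ℕ} [NeZero n] (par : Fin n → Fin n)
    (hpar : ∀ v, v ≠ 0 → par v < v) (v : Fin n) (h : v ≠ 0) :
    ancestors par hpar v = insert (par v) (ancestors par hpar (par v)) := by
  rw [ancestors]; simp [h]

lemma mem_ancestors_lt {n : ℕ} [NeZero n] (par : Fin n → Fin n)
    (hpar : ∀ v, v ≠ 0 → par v < v) (v w : Fin n)
    (hw : w ∈ ancestors par hpar v) : w < v := by
  by_cases h : v = 0
  · rw [h, ancestors_zero] at hw; simp at hw
  · rw [ancestors_ne par hpar v h] at hw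
    rcases Finset.mem_insert.mp hw with h1 | h1
    · exact h1 ▸ hpar v h
    · exact lt_trans (mem_ancestors_lt par hpar (par v) w h1) (hpar v h)
termination_by (v : ℕ)
decreasing_by exact hpar v h

lemma mem_barA_le {n : ℕ} [NeZero n] (par : Fin n → Fin n)
    (hpar : ∀ v, v ≠ 0 → par v < v) (v w : Fin n)
    (hw : w ∈ barA par hpar v) : w ≤ v := by
  rcases Finset.mem_insert.mp hw with h1 | h1
  · exact le_of_eq h1
  · exact le_of_lt (mem_ancestors_lt par hpar v w h1)

lemma barA_ne {n : ℕ} [NeZero n] (par : Fin n → Fin n)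
    (hpar : ∀ v, v ≠ 0 → par v < v) (v : Fin n) (h : v ≠ 0) :
    barA par hpar v = insert v (barA par hpar (par v)) := by
  unfold barA; rw [ancestors_ne par hpar v h]

lemma sum_gamma_eq {n : ℕ} [NeZero n] (par : Fin n → Fin n)
    (hpar : ∀ v, v ≠ 0 → par v < v) (κ : Fin n → ℝ) (v : Fin n) :
    ∑ v' ∈ barA par hpar v, (κ v' * ∏ v'' ∈ ancestors par hpar v', (1 - κ v''))
      = 1 - ∏ v' ∈ barA par hpar v, (1 - κ v') := by
  by_cases h : v = 0
  · subst h
    rw [barA, ancestors_zero]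
    simp [ancestors_zero]
  · have hA : ancestors par hpar v = barA par hpar (par v) := by
      rw [ancestors_ne par hpar v h]; rfl
    have hnot : v ∉ barA par hpar (par v) := fun hc =>
      absurd (mem_barA_le par hpar (par v) v hc) (not_le.mpr (hpar v h))
    rw [barA_ne par hpar v h, Finset.sum_insert hnot, Finset.prod_insert hnot,
      sum_gamma_eq par hpar κ (par v), hA]
    ring
termination_by (v : ℕ)
decreasing_by exact hpar v h

/-- Feasibility of the proportional-fair activation vector: with
`κ*_v = n_v / ∑_{v' ∈ D̄(v)} n_{v'}` and `γ*_v = κ*_v ∏_{v'' ∈ A(v)} (1 - κ*_{v''})`,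
one has `∑_{v' ∈ Ā(v)} γ*_{v'} ≤ 1` for every vertex `v`. -/
theorem pf_activation_feasible {n : ℕ} [NeZero n] (par : Fin n → Fin n)
    (hpar : ∀ v, v ≠ 0 → par v < v) (cnt : Fin n → ℕ)
    (hcnt : ∀ v, 0 < ∑ v' ∈ barD par hpar v, cnt v') :
    let κ : Fin n → ℝ := fun v => (cnt v : ℝ) / ∑ v' ∈ barD par hpar v, (cnt v' : ℝ)
    let γ : Fin n → ℝ := fun v => κ v * ∏ v'' ∈ ancestors par hpar v, (1 - κ v'')
    ∀ v, ∑ v' ∈ barA par hpar v, γ v' ≤ 1 := by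
  intro κ γ v
  have hS : ∀ w, (0:ℝ) < ∑ v' ∈ barD par hpar w, (cnt v' : ℝ) := by
    intro w
    rw [← Nat.cast_sum]
    exact_mod_cast hcnt w
  have hself : ∀ w : Fin n, w ∈ barD par hpar w := by
    intro w
    simp only [barD, Finset.mem_filter, Finset.mem_univ, true_and]
    exact Finset.mem_insert_self _ _
  have hκ0 : ∀ w, 0 ≤ κ w := fun w =>
    div_nonneg (Nat.cast_nonneg _) (le_of_lt (hS w))
  have hκ1 : ∀ w, κ w ≤ 1 := by
    intro w
    rw [div_le_one (hS w)]
    exact Finset.single_le_sum (f := fun i => (cnt i : ℝ)) (fun i _ => Nat.cast_nonneg (cnt i)) (hself w)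
  show ∑ v' ∈ barA par hpar v, (κ v' * ∏ v'' ∈ ancestors par hpar v', (1 - κ v'')) ≤ 1
  rw [sum_gamma_eq par hpar κ v]
  have : 0 ≤ ∏ v' ∈ barA par hpar v, (1 - κ v') :=
    Finset.prod_nonneg fun w _ => by linarith [hκ1 w]
  linarith
end
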